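/- Fix a prime p. Let x, y, z, m, w, q, u, r be integers with z ≠ 0, gcd(y,z) = 1, q*x = u*y - z*r, and x^p - m*y^p = z*w. Then z divides u^p - m*q^p. -/
import Mathlib

/-- `z` divides `u^p - m*q^p`. -/
theorem stmt_4 (p : ℕ) (hp : p.Prime) (x y z m w q u r : ℤ) (hz : z ≠ 0)
    (hyz : Int.gcd y z = 1) (hlin : q * x = u * y - z * r)
    (heq : x ^ p - m * y ^ p = z * w) :
    z ∣ u ^ p - m * q ^ p := by
  have h1 : z ∣ (u * y) ^ p - (q * x) ^ p := by
    refine dvd_trans (Dvd.intro r ?_) (sub_dvd_pow_sub_pow _ _ _)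
    linarith
  have h2 : z ∣ y ^ p * (u ^ p - m * q ^ p) := by
    have : y ^ p * (u ^ p - m * q ^ p)
        = ((u * y) ^ p - (q * x) ^ p) + q ^ p * (x ^ p - m * y ^ p) := by ring
    rw [this, heq]
    exact dvd_add h1 ⟨q ^ p * w, by ring⟩
  have hc : IsCoprime z (y ^ p) :=
    ((Int.isCoprime_iff_gcd_eq_one.mpr hyz).symm).pow_right
  exact hc.dvd_of_dvd_mul_left h2
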